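/- Let f ∈ K[x,y,z] be an irreducible polynomial of total degree d > 1. Then there exists at most one point A ∈ K³ such that mult(A,f) = d. -/

import Mathlib

/-!
If `mult(A, f) = d = deg f`, the translate `g = f(x + A)` is a form of degree `d`: the surface is a
cone with vertex `A`. If it is also a cone with vertex `B ≠ A`, comparing the two homogeneities
shows that `g` is invariant under translation along `c = B - A`. On a plane complementary to `c`,
`g` is a binary form, which over an algebraically closed field vanishes on a line; so `g` vanishes
on the plane spanned by that line and `c`. Then an affine linear form divides `f`, which is
impossible for an irreducible `f` of degree `d > 1`.
-/

open MvPolynomial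

/-- The multiplicity of a point `A` on the hypersurface defined by `f`:
the smallest total degree of a monomial of the translate of `f` by `A`. -/
noncomputable def multAt {K : Type*} [CommRing K] {n : ℕ} (A : Fin n → K)
    (f : MvPolynomial (Fin n) K) : ℕ :=
  sInf {k | ∃ m ∈ (MvPolynomial.aeval
      (fun i => MvPolynomial.X i + MvPolynomial.C (A i)) f).support,
      (m.sum fun _ e => e) = k}

open Matrix

theorem Matrix.exists_isUnit_det_and_row_zero_eq {K : Type*} [Field K] {c : Fin 3 → K}
    (hc : c ≠ 0) : ∃ R : Matrix (Fin 3) (Fin 3) K, IsUnit R.det ∧ R 0 = c := by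
  obtain ⟨j, hj⟩ := Function.ne_iff.mp hc
  refine ⟨Matrix.of ![c, Pi.single (j + 1) 1, Pi.single (j + 2) 1], ?_, rfl⟩
  rw [isUnit_iff_ne_zero, Matrix.det_fin_three]
  fin_cases j <;> simpa [Pi.single_apply] using hj

namespace MvPolynomial

section CommRing

variable {σ τ R : Type*} [CommRing R]

theorem eval_aeval (x : τ → R) (v : σ → MvPolynomial τ R) (f : MvPolynomial σ R) :
    eval x (aeval v f) = eval (fun i => eval x (v i)) f := by
  rw [aeval_eq_bind₁]
  exact eval₂Hom_bind₁ _ _ _ _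

noncomputable def translate (a : σ → R) : MvPolynomial σ R →ₐ[R] MvPolynomial σ R :=
  aeval fun i => X i + C (a i)

theorem eval_translate (a x : σ → R) (f : MvPolynomial σ R) :
    eval x (translate a f) = eval (x + a) f := by
  simp only [translate, eval_aeval, eval_add, eval_X, eval_C]
  rfl

theorem totalDegree_aeval_le [Fintype σ] (v : σ → MvPolynomial τ R)
    (hv : ∀ i, (v i).totalDegree ≤ 1) (p : MvPolynomial σ R) :
    (aeval v p).totalDegree ≤ p.totalDegree := by
  rw [aeval_def, eval₂_eq']
  refine (totalDegree_finsetSum _ _).trans (Finset.sup_le fun m hm => ?_)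
  calc _ ≤ (algebraMap R (MvPolynomial τ R) (p.coeff m)).totalDegree
        + (∏ i, v i ^ m i).totalDegree := totalDegree_mul _ _
    _ ≤ 0 + ∑ i, m i := by
      gcongr
      · simp [algebraMap_eq]
      · refine (totalDegree_finsetProd _ _).trans (Finset.sum_le_sum fun i _ => ?_)
        exact (totalDegree_pow _ _).trans (by simpa using Nat.mul_le_mul_left (m i) (hv i))
    _ ≤ p.totalDegree := by
      rw [zero_add, ← Finset.sum_subset (Finset.subset_univ m.support) (by simp)]
      exact le_totalDegree hm

theorem totalDegree_translate_le [Fintype σ] (a : σ → R) (f : MvPolynomial σ R) :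
    (translate a f).totalDegree ≤ f.totalDegree :=
  totalDegree_aeval_le _ (fun i => (totalDegree_add _ _).trans <|
    max_le ((totalDegree_monomial_le _ _).trans (by simp)) (by simp)) f

theorem dvd_sub_aeval_of_forall_dvd_X_sub {ℓ : MvPolynomial σ R} {v : σ → MvPolynomial σ R}
    (hv : ∀ i, ℓ ∣ X i - v i) (p : MvPolynomial σ R) : ℓ ∣ p - aeval v p := by
  induction p using MvPolynomial.induction_on with
  | C a => simp
  | add p q hp hq => simpa [add_sub_add_comm] using dvd_add hp hq
  | mul_X p i hp =>
    have : p * X i - aeval v (p * X i) = (p - aeval v p) * X i + aeval v p * (X i - v i) := by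
      simp only [map_mul, aeval_X]; ring
    rw [this]
    exact dvd_add (hp.mul_right _) ((hv i).mul_left _)

theorem totalDegree_le_of_irreducible_of_dvd [IsReduced R] {f ℓ : MvPolynomial σ R}
    (hf : Irreducible f) (hℓ : ¬IsUnit ℓ) (h : ℓ ∣ f) : f.totalDegree ≤ ℓ.totalDegree := by
  obtain ⟨r, rfl⟩ := h
  have hr := isUnit_iff_totalDegree_of_isReduced.mp ((hf.isUnit_or_isUnit rfl).resolve_left hℓ)
  simpa [hr.2] using totalDegree_mul ℓ r

end CommRing

variable {σ K : Type*} [Field K]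

theorem IsHomogeneous.eval_smul {g : MvPolynomial σ K} {d : ℕ} (hg : g.IsHomogeneous d)
    (l : K) (x : σ → K) : eval (l • x) g = l ^ d * eval x g := by
  rw [eval_eq, eval_eq, Finset.mul_sum]
  refine Finset.sum_congr rfl fun m hm => ?_
  simp only [Pi.smul_apply, smul_eq_mul, mul_pow, Finset.prod_mul_distrib,
    Finset.prod_pow_eq_pow_sum, ← hg.degree_eq_sum_deg_support hm]
  ring

theorem exists_polynomial_eval_eq_eval_add_smul (g : MvPolynomial σ K) (p q : σ → K) :
    ∃ P : Polynomial K, ∀ t, P.eval t = eval (p + t • q) g := by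
  refine ⟨aeval (fun i => Polynomial.C (p i) + Polynomial.C (q i) * Polynomial.X) g, fun t => ?_⟩
  change Polynomial.aeval t (aeval _ g) = aeval (p + t • q) g
  rw [← AlgHom.comp_apply, comp_aeval]
  congr 1
  ext i
  simp
  ring

theorem eval_eq_of_forall_ne_zero_eval_add_smul [Infinite K] {g : MvPolynomial σ K}
    {p q : σ → K} {φ : Polynomial K} (h : ∀ t ≠ 0, eval (p + t • q) g = φ.eval t) :
    eval p g = φ.eval 0 := by
  obtain ⟨P, hP⟩ := exists_polynomial_eval_eq_eval_add_smul g p q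
  have hPφ : P = φ := Polynomial.eq_of_infinite_eval_eq P φ <|
    (Set.finite_singleton 0).infinite_compl.mono fun t ht => (hP t).trans (h t ht)
  simpa using (hP 0).symm.trans (congrArg (Polynomial.eval 0) hPφ)

theorem IsHomogeneous.eval_add_smul_eq [Infinite K] {g h : MvPolynomial σ K} {d : ℕ}
    (hg : g.IsHomogeneous d) (hh : h.IsHomogeneous d) {c : σ → K}
    (hgh : ∀ x, eval x h = eval (x + c) g) (x : σ → K) (t : K) :
    eval (x + t • c) g = eval x g := by
  have hline : ∀ l ≠ (0 : K), eval (x + l • c) g = eval x h := fun l hl => by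
    calc eval (x + l • c) g = eval (l • (l⁻¹ • x + c)) g := by
          rw [smul_add, smul_smul, mul_inv_cancel₀ hl, one_smul]
      _ = eval (l • (l⁻¹ • x)) h := by
          rw [hg.eval_smul, hh.eval_smul, hgh]
      _ = eval x h := by rw [smul_smul, mul_inv_cancel₀ hl, one_smul]
  have h0 : eval x g = eval x h := by
    simpa using eval_eq_of_forall_ne_zero_eval_add_smul (φ := Polynomial.C (eval x h))
      fun l hl => by simpa using hline l hl
  rcases eq_or_ne t 0 with rfl | ht
  · simp
  · rw [hline t ht, h0]

theorem IsHomogeneous.exists_eval_smul_add_smul_eq_zero [IsAlgClosed K] {g : MvPolynomial σ K}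
    {d : ℕ} (hg : g.IsHomogeneous d) (hd : 0 < d) (u w : σ → K) :
    ∃ α β : K, (α ≠ 0 ∨ β ≠ 0) ∧ ∀ s t, α * s + β * t = 0 → eval (s • u + t • w) g = 0 := by
  obtain ⟨P, hP⟩ := exists_polynomial_eval_eq_eval_add_smul g w u
  by_cases hdeg : P.degree = 0
  · -- `g` is constant on the line `w + K u`, so it vanishes at `u`, its point at infinity.
    have hconst : ∀ t : K, eval (w + t • u) g = eval w g := fun t => by
      have h0 := hP 0
      rw [zero_smul, add_zero] at h0
      rw [← hP, ← h0, Polynomial.eq_C_of_degree_eq_zero hdeg]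
      simp
    have hu : eval u g = 0 := by
      have := eval_eq_of_forall_ne_zero_eval_add_smul (g := g) (p := u) (q := w)
        (φ := Polynomial.C (eval w g) * Polynomial.X ^ d) fun t ht => by
          calc eval (u + t • w) g = eval (t • (w + t⁻¹ • u)) g := by
                rw [smul_add, smul_smul, mul_inv_cancel₀ ht, one_smul, add_comm]
            _ = _ := by rw [hg.eval_smul, hconst]; simp [mul_comm (eval w g)]
      simpa [hd.ne'] using this
    refine ⟨0, 1, Or.inr one_ne_zero, fun s t hst => ?_⟩
    obtain rfl : t = 0 := by simpa using hst
    simp [hg.eval_smul, hu]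
  · obtain ⟨t₀, ht₀⟩ := IsAlgClosed.exists_root P hdeg
    refine ⟨1, -t₀, Or.inl one_ne_zero, fun s t hst => ?_⟩
    have : s • u + t • w = t • (w + t₀ • u) := by
      rw [show s = t₀ * t by linear_combination hst, smul_add, smul_smul, add_comm, mul_comm]
    rw [this, hg.eval_smul, ← hP, ht₀.eq_zero, mul_zero]

theorem dvd_of_forall_eval_sub_smul_eq_zero [Infinite K] {ℓ f : MvPolynomial σ K} (e : σ → K)
    (h : ∀ x, eval (x - eval x ℓ • e) f = 0) : ℓ ∣ f := by
  have hsub : aeval (fun i => X i - C (e i) * ℓ) f = 0 := funext fun x => by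
    rw [eval_aeval, map_zero, ← h x]
    congr 2
    ext i
    simp [mul_comm]
  have := dvd_sub_aeval_of_forall_dvd_X_sub (v := fun i => X i - C (e i) * ℓ)
    (fun i => ⟨C (e i), by ring⟩) f
  rwa [hsub, sub_zero] at this

theorem totalDegree_le_one_of_irreducible_of_forall_dotProduct_eq [Fintype σ] [Infinite K]
    {f : MvPolynomial σ K} (hf : Irreducible f) {a : σ → K} (ha : a ≠ 0) (b : K)
    (h : ∀ x, a ⬝ᵥ x = b → eval x f = 0) : f.totalDegree ≤ 1 := by
  classical
  obtain ⟨j, hj⟩ := Function.ne_iff.mp ha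
  set e : σ → K := Pi.single j (a j)⁻¹
  have he : a ⬝ᵥ e = 1 := by rw [dotProduct_single]; exact mul_inv_cancel₀ hj
  set ℓ : MvPolynomial σ K := ∑ i, C (a i) * X i - C b
  have hℓ : ∀ x, eval x ℓ = a ⬝ᵥ x - b := fun x => by simp [ℓ, dotProduct]
  have hdvd : ℓ ∣ f := dvd_of_forall_eval_sub_smul_eq_zero e fun x => h _ <| by
    rw [dotProduct_sub, dotProduct_smul, he, hℓ, smul_eq_mul, mul_one, sub_sub_cancel]
  have hunit : ¬IsUnit ℓ := fun hu => (hu.map (eval (b • e))).ne_zero <| by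
    rw [hℓ, dotProduct_smul, he, smul_eq_mul, mul_one, sub_self]
  have hdeg : ℓ.totalDegree ≤ 1 := (totalDegree_sub_C_le _ _).trans <|
    (IsHomogeneous.sum _ _ _ fun i _ => isHomogeneous_C_mul_X (a i) i).totalDegree_le
  exact (totalDegree_le_of_irreducible_of_dvd hf hunit hdvd).trans hdeg

theorem IsHomogeneous.exists_forall_dotProduct_eq_zero_eval_eq_zero [IsAlgClosed K]
    {g : MvPolynomial (Fin 3) K} {d : ℕ} (hg : g.IsHomogeneous d) (hd : 0 < d) {c : Fin 3 → K}
    (hc : c ≠ 0) (hinv : ∀ x (t : K), eval (x + t • c) g = eval x g) :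
    ∃ a : Fin 3 → K, a ≠ 0 ∧ ∀ x, a ⬝ᵥ x = 0 → eval x g = 0 := by
  obtain ⟨R, hR, hR0⟩ := Matrix.exists_isUnit_det_and_row_zero_eq hc
  obtain ⟨α, β, hαβ, hzero⟩ := hg.exists_eval_smul_add_smul_eq_zero hd (R 1) (R 2)
  -- In coordinates `y` with respect to the rows `c, R 1, R 2`, the plane is `α y₁ + β y₂ = 0`.
  refine ⟨R⁻¹ *ᵥ ![0, α, β], fun ha => ?_, fun x hax => ?_⟩
  · have h := congrArg (R *ᵥ ·) ha
    simp only [mulVec_mulVec, mul_nonsing_inv _ hR, one_mulVec, mulVec_zero] at h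
    rcases hαβ with hα | hβ
    · exact hα (congrFun h 1)
    · exact hβ (congrFun h 2)
  · set y := x ᵥ* R⁻¹
    have hx : x = (y 1 • R 1 + y 2 • R 2) + y 0 • c := by
      rw [← hR0, add_comm, ← add_assoc, ← Fin.sum_univ_three (fun i => y i • R i),
        ← vecMul_eq_sum, vecMul_vecMul, nonsing_inv_mul _ hR, vecMul_one]
    have hy : α * y 1 + β * y 2 = 0 := by
      rw [dotProduct_comm, dotProduct_mulVec] at hax
      simpa [y, dotProduct, Fin.sum_univ_three, mul_comm] using hax
    rw [hx, hinv, hzero _ _ hy]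

end MvPolynomial

theorem isHomogeneous_translate_of_multAt_eq {K : Type*} [CommRing K] {n d : ℕ}
    {f : MvPolynomial (Fin n) K} (hf : f.totalDegree ≤ d) {A : Fin n → K} (hA : multAt A f = d) :
    (translate A f).IsHomogeneous d := by
  intro m hm
  have hle : (m.sum fun _ e => e) ≤ d :=
    (le_totalDegree (mem_support_iff.mpr hm)).trans ((totalDegree_translate_le A f).trans hf)
  have hge : d ≤ m.sum fun _ e => e := hA ▸ Nat.sInf_le ⟨m, mem_support_iff.mpr hm, rfl⟩
  simpa [Finsupp.weight_apply] using le_antisymm hle hge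

theorem at_most_one_max_mult_point_general {K : Type*} [Field K] [IsAlgClosed K]
    (f : MvPolynomial (Fin 3) K) (hf : Irreducible f) (d : ℕ)
    (hd : f.totalDegree = d) (hd1 : 1 < d) :
    ∀ A B : Fin 3 → K, multAt A f = d → multAt B f = d → A = B := by
  intro A B hA hB
  by_contra hAB
  have hgA := isHomogeneous_translate_of_multAt_eq hd.le hA
  have hgB := isHomogeneous_translate_of_multAt_eq hd.le hB
  have hinv := hgA.eval_add_smul_eq hgB (c := B - A) fun x => by
    rw [eval_translate, eval_translate, add_assoc, sub_add_cancel]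
  obtain ⟨a, ha, hplane⟩ := hgA.exists_forall_dotProduct_eq_zero_eval_eq_zero (by omega)
    (sub_ne_zero.mpr (Ne.symm hAB)) hinv
  have hf1 : f.totalDegree ≤ 1 :=
    totalDegree_le_one_of_irreducible_of_forall_dotProduct_eq hf ha (a ⬝ᵥ A) fun x hx => by
      rw [← sub_add_cancel x A, ← eval_translate]
      exact hplane _ (by rw [dotProduct_sub, hx, sub_self])
  omega

theorem at_most_one_max_mult_point {K : Type*} [Field K] [IsAlgClosed K] [CharZero K]
    (f : MvPolynomial (Fin 3) K) (hf : Irreducible f) (d : ℕ)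
    (hd : f.totalDegree = d) (hd1 : 1 < d) :
    ∀ A B : Fin 3 → K, multAt A f = d → multAt B f = d → A = B :=
  at_most_one_max_mult_point_general f hf d hd hd1
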